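/- arXiv:2506.19758 — 2 statements merged into one kernel-verified Lean document; each statement's English description precedes it below -/
import Mathlib

section
/- If L₁ and L₂ are non-nilpotent finite-dimensional Lie algebras over a field F, then the nilpotent graph Γ_N(L₁ ⊕ L₂) is connected; indeed any two vertices are joined by a path of length at most 3. -/
section ProdLie

variable (L₁ L₂ : Type*) [LieRing L₁] [LieRing L₂]

/-- The direct sum of two Lie rings, with componentwise bracket. -/
instance Prod.instLieRing : LieRing (L₁ × L₂) where
  bracket p q := (⁅p.1, q.1⁆, ⁅p.2, q.2⁆)
  add_lie x y z := Prod.ext (add_lie x.1 y.1 z.1) (add_lie x.2 y.2 z.2)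
  lie_add x y z := Prod.ext (lie_add x.1 y.1 z.1) (lie_add x.2 y.2 z.2)
  lie_self x := Prod.ext (lie_self x.1) (lie_self x.2)
  leibniz_lie x y z := Prod.ext (leibniz_lie x.1 y.1 z.1) (leibniz_lie x.2 y.2 z.2)

/-- The direct sum of two Lie algebras. -/
instance Prod.instLieAlgebra (F : Type*) [CommRing F] [LieAlgebra F L₁] [LieAlgebra F L₂] :
    LieAlgebra F (L₁ × L₂) where
  lie_smul c x y := Prod.ext (lie_smul c x.1 y.1) (lie_smul c x.2 y.2)

end ProdLie

/-- The nilpotentizer of a Lie algebra `L`: the set of elements `x` such that the Lie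
subalgebra generated by `x` and `y` is nilpotent for every `y ∈ L`. -/
def nilSet (F : Type*) [Field F] (L : Type*) [LieRing L] [LieAlgebra F L] : Set L :=
  {x : L | ∀ y : L, LieRing.IsNilpotent (LieSubalgebra.lieSpan F L {x, y})}

/-- The nilpotent graph of a Lie algebra `L`: vertices are the elements of
`L \\ nil(L)`, and two distinct vertices are adjacent iff the Lie subalgebra
they generate is nilpotent. -/
def nilGraph (F : Type*) [Field F] (L : Type*) [LieRing L] [LieAlgebra F L] :
    SimpleGraph {x : L // x ∉ nilSet F L} where
  Adj x y := x ≠ y ∧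
    LieRing.IsNilpotent (LieSubalgebra.lieSpan F L {(x : L), (y : L)})
  symm := by
    constructor
    rintro x y ⟨h1, h2⟩
    exact ⟨h1.symm, by rwa [Set.pair_comm]⟩
  loopless := by constructor; rintro x ⟨h1, -⟩; exact h1 rfl

/-!
A pair generates a nilpotent subalgebra of `L₁ × L₂` iff both coordinate pairs do, so
`nil(L₁ × L₂) = nil(L₁) × nil(L₂)`. Hence every `p` is equal or adjacent to a vertex `(m, 0)`
with `m ∉ nil(L₁)`: take `m = p.1` if `p.1 ∉ nil(L₁)`, and any fixed `m ∉ nil(L₁)` (which exists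
by Engel's theorem) otherwise. Likewise for a vertex `(0, n)`, and `(m, 0)`, `(0, n)` commute,
so `u, (m, 0), (0, n), v` is a walk of length at most 3.
-/

open LieAlgebra LieSubalgebra

section Nilpotency

variable {R L L' : Type*} [CommRing R] [LieRing L] [LieAlgebra R L] [LieRing L'] [LieAlgebra R L']

lemma LieSubalgebra.isNilpotent_of_le {K H : LieSubalgebra R L} (hKH : K ≤ H)
    [LieRing.IsNilpotent H] : LieRing.IsNilpotent K :=
  (inclusion_injective hKH).lieAlgebra_isNilpotent

lemma LieSubalgebra.isNilpotent_map (f : L →ₗ⁅R⁆ L') (H : LieSubalgebra R L)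
    [LieRing.IsNilpotent H] : LieRing.IsNilpotent (H.map f) := by
  have : H.map f = (f.comp H.incl).range := by ext; simp
  rw [this]
  exact (f.comp H.incl).isNilpotent_range

lemma isNilpotent_lieSpan_pair_of_lie_eq_zero {x y : L} (h : ⁅x, y⁆ = 0) :
    LieRing.IsNilpotent (lieSpan R L {x, y}) := by
  have : IsLieAbelian (lieSpan R L {x, y}) := by
    rw [isLieAbelian_lieSpan_iff]
    simp [h, ← lie_skew y x]
  infer_instance

end Nilpotency

section Prod

variable {R L₁ L₂ : Type*} [CommRing R] [LieRing L₁] [LieRing L₂]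
  [LieAlgebra R L₁] [LieAlgebra R L₂]

lemma ad_pow_prod_apply (x y : L₁ × L₂) (n : ℕ) :
    (ad R (L₁ × L₂) x ^ n) y = ((ad R L₁ x.1 ^ n) y.1, (ad R L₂ x.2 ^ n) y.2) := by
  induction n generalizing y with
  | zero => rfl
  | succ n ih => rw [pow_succ, Module.End.mul_apply, ih]; rfl

lemma LieAlgebra.isNilpotent_prod [IsNoetherian R L₁] [IsNoetherian R L₂]
    [LieRing.IsNilpotent L₁] [LieRing.IsNilpotent L₂] : LieRing.IsNilpotent (L₁ × L₂) := by
  rw [isNilpotent_iff_forall (R := R)]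
  intro x
  obtain ⟨n₁, hn₁⟩ := (isNilpotent_iff_forall (R := R)).mp ‹_› x.1
  obtain ⟨n₂, hn₂⟩ := (isNilpotent_iff_forall (R := R)).mp ‹_› x.2
  refine ⟨max n₁ n₂, LinearMap.ext fun y => ?_⟩
  rw [ad_pow_prod_apply, pow_eq_zero_of_le (le_max_left _ _) hn₁,
    pow_eq_zero_of_le (le_max_right _ _) hn₂]
  rfl

end Prod

section Field

variable {F L₁ L₂ : Type*} [Field F] [LieRing L₁] [LieRing L₂]
  [LieAlgebra F L₁] [LieAlgebra F L₂]

lemma isNilpotent_lieSpan_pair_prod_iff [Module.Finite F L₁] [Module.Finite F L₂]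
    (x y : L₁ × L₂) :
    LieRing.IsNilpotent (lieSpan F (L₁ × L₂) {x, y}) ↔
      LieRing.IsNilpotent (lieSpan F L₁ {x.1, y.1}) ∧
        LieRing.IsNilpotent (lieSpan F L₂ {x.2, y.2}) := by
  constructor
  · intro h
    constructor
    · have := (lieSpan F (L₁ × L₂) {x, y}).isNilpotent_map (LieHom.fst F L₁ L₂)
      rwa [map_lieSpan, Set.image_pair] at this
    · have := (lieSpan F (L₁ × L₂) {x, y}).isNilpotent_map (LieHom.snd F L₁ L₂)
      rwa [map_lieSpan, Set.image_pair] at this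
  · rintro ⟨h₁, h₂⟩
    set H₁ := lieSpan F L₁ {x.1, y.1}
    set H₂ := lieSpan F L₂ {x.2, y.2}
    have : LieRing.IsNilpotent (H₁ × H₂) := isNilpotent_prod (R := F)
    have hle : lieSpan F (L₁ × L₂) {x, y} ≤ (H₁.incl.prodMap H₂.incl).range := by
      rw [lieSpan_le]
      rintro z (rfl | rfl) <;>
        exact ⟨(⟨z.1, subset_lieSpan (by simp)⟩, ⟨z.2, subset_lieSpan (by simp)⟩), rfl⟩
    have := (H₁.incl.prodMap H₂.incl).isNilpotent_range
    exact isNilpotent_of_le hle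

lemma nilSet_prod [Module.Finite F L₁] [Module.Finite F L₂] :
    nilSet F (L₁ × L₂) = nilSet F L₁ ×ˢ nilSet F L₂ := by
  ext x
  refine ⟨fun hx => ⟨fun y => ?_, fun y => ?_⟩, fun hx y => ?_⟩
  · exact ((isNilpotent_lieSpan_pair_prod_iff x (y, 0)).mp (hx _)).1
  · exact ((isNilpotent_lieSpan_pair_prod_iff x (0, y)).mp (hx _)).2
  · exact (isNilpotent_lieSpan_pair_prod_iff x y).mpr ⟨hx.1 y.1, hx.2 y.2⟩

lemma exists_inl_isNilpotent_lieSpan_pair [Module.Finite F L₁] [Module.Finite F L₂] {x₁ : L₁}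
    (hx₁ : x₁ ∉ nilSet F L₁) (p : L₁ × L₂) :
    ∃ m ∉ nilSet F L₁, LieRing.IsNilpotent (lieSpan F (L₁ × L₂) {p, (m, 0)}) := by
  by_cases hp : p.1 ∈ nilSet F L₁
  · exact ⟨x₁, hx₁, (isNilpotent_lieSpan_pair_prod_iff _ _).mpr
      ⟨hp x₁, isNilpotent_lieSpan_pair_of_lie_eq_zero (lie_zero _)⟩⟩
  · exact ⟨p.1, hp, (isNilpotent_lieSpan_pair_prod_iff _ _).mpr
      ⟨isNilpotent_lieSpan_pair_of_lie_eq_zero (lie_self _),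
        isNilpotent_lieSpan_pair_of_lie_eq_zero (lie_zero _)⟩⟩

lemma exists_inr_isNilpotent_lieSpan_pair [Module.Finite F L₁] [Module.Finite F L₂] {x₂ : L₂}
    (hx₂ : x₂ ∉ nilSet F L₂) (p : L₁ × L₂) :
    ∃ n ∉ nilSet F L₂, LieRing.IsNilpotent (lieSpan F (L₁ × L₂) {p, (0, n)}) := by
  by_cases hp : p.2 ∈ nilSet F L₂
  · exact ⟨x₂, hx₂, (isNilpotent_lieSpan_pair_prod_iff _ _).mpr
      ⟨isNilpotent_lieSpan_pair_of_lie_eq_zero (lie_zero _), hp x₂⟩⟩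
  · exact ⟨p.2, hp, (isNilpotent_lieSpan_pair_prod_iff _ _).mpr
      ⟨isNilpotent_lieSpan_pair_of_lie_eq_zero (lie_zero _),
        isNilpotent_lieSpan_pair_of_lie_eq_zero (lie_self _)⟩⟩

end Field

lemma exists_notMem_nilSet (F : Type*) {L : Type*} [Field F] [LieRing L] [LieAlgebra F L]
    [Module.Finite F L] (h : ¬ LieRing.IsNilpotent L) : ∃ x, x ∉ nilSet F L := by
  by_contra! hL
  refine h ((isNilpotent_iff_forall (R := F)).mpr fun x => ?_)
  refine Module.End.isNilpotent_iff_of_finite.mpr fun y => ?_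
  have : LieRing.IsNilpotent (lieSpan F L {x, y}) := hL x y
  let H := lieSpan F L {x, y}
  have hx : x ∈ H := subset_lieSpan (by simp)
  have hy : y ∈ H := subset_lieSpan (by simp)
  obtain ⟨n, hn⟩ : IsNilpotent (ad F H ⟨x, hx⟩) :=
    LieModule.isNilpotent_toEnd_of_isNilpotent F H H _
  refine ⟨n, ?_⟩
  rw [← coe_ad_pow F L H ⟨x, hx⟩ ⟨y, hy⟩, hn]
  rfl

lemma nilGraph_edist_le_one {F L : Type*} [Field F] [LieRing L] [LieAlgebra F L]
    {x y : {x : L // x ∉ nilSet F L}}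
    (h : LieRing.IsNilpotent (lieSpan F L {(x : L), (y : L)})) :
    (nilGraph F L).edist x y ≤ 1 := by
  rw [SimpleGraph.edist_le_one_iff_adj_or_eq]
  by_cases hxy : x = y
  · exact Or.inr hxy
  · exact Or.inl ⟨hxy, h⟩

lemma SimpleGraph.connected_and_dist_le_of_edist_le {V : Type*} [Nonempty V] {G : SimpleGraph V}
    {n : ℕ} (h : ∀ u v, G.edist u v ≤ n) : G.Connected ∧ ∀ u v, G.dist u v ≤ n := by
  have hreach : ∀ u v, G.Reachable u v := fun u v =>
    reachable_of_edist_ne_top (ne_top_of_le_ne_top (ENat.natCast_ne_top n) (h u v))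
  refine ⟨⟨hreach⟩, fun u v => ?_⟩
  have := h u v
  rwa [← (hreach u v).coe_dist_eq_edist, Nat.cast_le] at this

theorem nilGraph_prod_connected
    (F : Type*) [Field F] (L₁ L₂ : Type*) [LieRing L₁] [LieRing L₂]
    [LieAlgebra F L₁] [LieAlgebra F L₂] [Module.Finite F L₁] [Module.Finite F L₂]
    (h₁ : ¬ LieRing.IsNilpotent L₁) (h₂ : ¬ LieRing.IsNilpotent L₂) :
    (nilGraph F (L₁ × L₂)).Connected ∧
      ∀ u v : {x : L₁ × L₂ // x ∉ nilSet F (L₁ × L₂)},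
        (nilGraph F (L₁ × L₂)).dist u v ≤ 3 := by
  obtain ⟨x₁, hx₁⟩ := exists_notMem_nilSet F h₁
  obtain ⟨x₂, hx₂⟩ := exists_notMem_nilSet F h₂
  have hinl : ∀ m ∉ nilSet F L₁, ((m, 0) : L₁ × L₂) ∉ nilSet F (L₁ × L₂) := by
    simp +contextual [nilSet_prod]
  have hinr : ∀ n ∉ nilSet F L₂, ((0, n) : L₁ × L₂) ∉ nilSet F (L₁ × L₂) := by
    simp +contextual [nilSet_prod]
  have : Nonempty {x : L₁ × L₂ // x ∉ nilSet F (L₁ × L₂)} := ⟨⟨_, hinl x₁ hx₁⟩⟩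
  set G := nilGraph F (L₁ × L₂)
  refine SimpleGraph.connected_and_dist_le_of_edist_le fun u v => ?_
  obtain ⟨m, hm, hum⟩ := exists_inl_isNilpotent_lieSpan_pair hx₁ (u : L₁ × L₂)
  obtain ⟨n, hn, hvn⟩ := exists_inr_isNilpotent_lieSpan_pair hx₂ (v : L₁ × L₂)
  let a : {x : L₁ × L₂ // x ∉ nilSet F (L₁ × L₂)} := ⟨(m, 0), hinl m hm⟩
  let b : {x : L₁ × L₂ // x ∉ nilSet F (L₁ × L₂)} := ⟨(0, n), hinr n hn⟩
  have hab : LieRing.IsNilpotent (lieSpan F (L₁ × L₂) {((m, 0) : L₁ × L₂), (0, n)}) :=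
    isNilpotent_lieSpan_pair_of_lie_eq_zero (Prod.ext (lie_zero m) (zero_lie n))
  calc G.edist u v ≤ G.edist u b + G.edist b v := SimpleGraph.edist_triangle
    _ ≤ G.edist u a + G.edist a b + G.edist b v := by gcongr; exact SimpleGraph.edist_triangle
    _ ≤ 1 + 1 + 1 := by
      rw [SimpleGraph.edist_comm (u := b)]
      gcongr <;> exact nilGraph_edist_le_one ‹_›
    _ = 3 := rfl
end

section
/- The nilpotent graph of t(2, F_q) consists of exactly q+1 connected components, each of which is a complete graph on q(q−1) vertices. -/
attribute [local instance 100] LieRing.ofAssociativeRing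

/-- The Lie algebra `t(2,F)` of upper triangular `2 × 2` matrices over `F`,
as a Lie subalgebra of the matrix Lie algebra. -/
def t2 (F : Type*) [Field F] : LieSubalgebra F (Matrix (Fin 2) (Fin 2) F) where
  carrier := {A | A 1 0 = 0}
  add_mem' := by intro a b ha hb; simp_all [Set.mem_setOf_eq, Matrix.add_apply]
  zero_mem' := by simp
  smul_mem' := by intro c a ha; simp_all [Set.mem_setOf_eq, Matrix.smul_apply]
  lie_mem' := by
    intro a b ha hb
    simp_all [Set.mem_setOf_eq, Ring.lie_def, Matrix.sub_apply, Matrix.mul_apply,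
      Fin.sum_univ_two]

/-!
Modulo the scalar matrices, `t(2,F)` is `F²` via `x ↦ x̄ = (x₀₀ - x₁₁, x₀₁)`, and the bracket is
`⁅x, y⁆ = det(x̄, ȳ) • e₁₂`. Every `ad z` acts on `⁅x, y⁆` by the scalar `z₀₀ - z₁₁`. If `⟨x, y⟩` is
nilpotent and `⁅x, y⁆ ≠ 0`, this eigenvalue vanishes for `z = x, y`, forcing `det(x̄, ȳ) = 0`, a
contradiction; so `⟨x, y⟩` is nilpotent iff `x` and `y` commute. Hence the vertices are the `x` with
`x̄ ≠ 0`, and two of them are adjacent iff `x̄` and `ȳ` span the same line: the graph is a disjoint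
union of cliques indexed by the projective line over `F`, which has `q + 1` points, and each clique
has `q (q - 1)` vertices (a scalar part and a nonzero vector on the line).
-/

open scoped LinearAlgebra.Projectivization

theorem LieAlgebra.eq_zero_of_lie_eq_smul {K L : Type*} [Field K] [LieRing L] [LieAlgebra K L]
    [LieRing.IsNilpotent L] {x e : L} {c : K} (he : e ≠ 0) (h : ⁅x, e⁆ = c • e) : c = 0 :=
  (Module.End.HasEigenvalue.isNilpotent_of_isNilpotent
    (LieModule.isNilpotent_toEnd_of_isNilpotent K L L x)
    (Module.End.hasEigenvalue_of_hasEigenvector ⟨Module.End.mem_eigenspace_iff.2 h, he⟩)).eq_zero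

theorem LieSubalgebra.eq_zero_of_lie_eq_smul {K L : Type*} [Field K] [LieRing L] [LieAlgebra K L]
    (S : LieSubalgebra K L) [LieRing.IsNilpotent S] {x e : L} {c : K} (hx : x ∈ S)
    (he : e ∈ S) (he0 : e ≠ 0) (h : ⁅x, e⁆ = c • e) : c = 0 :=
  LieAlgebra.eq_zero_of_lie_eq_smul (x := (⟨x, hx⟩ : S)) (e := ⟨e, he⟩)
    (fun h0 => he0 (congrArg Subtype.val h0)) (Subtype.ext h)

namespace Projectivization

theorem mk_eq_mk_iff_det_eq_zero {K : Type*} [Field K] {v w : Fin 2 → K} (hv : v ≠ 0)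
    (hw : w ≠ 0) : mk K v hv = mk K w hw ↔ (Matrix.of ![v, w]).det = 0 := by
  have hdet : (Matrix.of ![w, v]).det = -(Matrix.of ![v, w]).det := by
    simp [Matrix.det_fin_two]; ring
  have hrows := Matrix.linearIndependent_rows_iff_isUnit (A := Matrix.of ![w, v])
  rw [Matrix.isUnit_iff_isUnit_det, isUnit_iff_ne_zero, hdet, neg_ne_zero] at hrows
  rw [← not_iff_not, mk_eq_mk_iff', not_exists, ← LinearIndependent.pair_iff' hw]
  exact hrows

theorem card_mk'_fiber {K V : Type*} [DivisionRing K] [AddCommGroup V] [Module K V] (p : ℙ K V) :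
    Nat.card {v : {v : V // v ≠ 0} // mk' K v = p} = Nat.card Kˣ := by
  rw [Nat.card_congr ((nonZeroEquivProjectivizationProdUnits K V).subtypeEquiv
      (p := fun v => mk' K v = p) (q := fun y => y.1 = p) fun _ => Iff.rfl),
    Nat.card_congr (Equiv.prodSubtypeFstEquivSubtypeProd (p := (· = p))), Nat.card_prod,
    Nat.card_unique, one_mul]

end Projectivization

namespace SimpleGraph

variable {V β : Type*} {G : SimpleGraph V} {f : V → β}

theorem connectedComponentMk_eq_iff_of_adj_iff (hG : ∀ u v, G.Adj u v ↔ u ≠ v ∧ f u = f v)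
    {u v : V} : G.connectedComponentMk u = G.connectedComponentMk v ↔ f u = f v := by
  rw [ConnectedComponent.eq, reachable_iff_reflTransGen]
  refine ⟨fun h => ?_, fun h => ?_⟩
  · induction h with
    | refl => rfl
    | tail _ hadj ih => exact ih.trans ((hG _ _).1 hadj).2
  · obtain rfl | hne := eq_or_ne u v
    · exact .refl
    · exact .single ((hG u v).2 ⟨hne, h⟩)

theorem card_connectedComponent_of_adj_iff (hG : ∀ u v, G.Adj u v ↔ u ≠ v ∧ f u = f v)
    (hf : Function.Surjective f) : Nat.card G.ConnectedComponent = Nat.card β := by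
  refine Nat.card_congr (.ofBijective (ConnectedComponent.lift f fun u v p _ =>
    (connectedComponentMk_eq_iff_of_adj_iff hG).1 (ConnectedComponent.sound p.reachable)) ⟨?_, ?_⟩)
  · rintro ⟨u⟩ ⟨v⟩ h
    exact (connectedComponentMk_eq_iff_of_adj_iff hG).2 h
  · intro b
    obtain ⟨v, rfl⟩ := hf b
    exact ⟨G.connectedComponentMk v, rfl⟩

end SimpleGraph

namespace t2

variable {F : Type*} [Field F]

def vec (x : t2 F) : Fin 2 → F := ![x.1 0 0 - x.1 1 1, x.1 0 1]

def e11 : t2 F := ⟨!![1, 0; 0, 0], rfl⟩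

def e12 : t2 F := ⟨!![0, 1; 0, 0], rfl⟩

theorem e12_ne_zero : (e12 : t2 F) ≠ 0 := fun h => by
  simpa [e12] using congrArg (fun x : t2 F => x.1 0 1) h

theorem lie_eq_det_smul (x y : t2 F) : ⁅x, y⁆ = (Matrix.of ![vec x, vec y]).det • e12 := by
  obtain ⟨x, hx : x 1 0 = 0⟩ := x
  obtain ⟨y, hy : y 1 0 = 0⟩ := y
  ext i j
  fin_cases i <;> fin_cases j <;>
    simp [Ring.lie_def, Matrix.mul_apply, Matrix.det_fin_two, vec, e12, hx, hy] <;> ring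

theorem lie_eq_zero_iff (x y : t2 F) : ⁅x, y⁆ = 0 ↔ (Matrix.of ![vec x, vec y]).det = 0 := by
  rw [lie_eq_det_smul, smul_eq_zero, or_iff_left e12_ne_zero]

theorem lie_lie_eq_smul (z x y : t2 F) : ⁅z, ⁅x, y⁆⁆ = vec z 0 • ⁅x, y⁆ := by
  rw [lie_eq_det_smul x y, lie_smul, lie_eq_det_smul z e12, smul_comm]
  simp [Matrix.det_fin_two, vec, e12]

theorem isNilpotent_lieSpan_pair_iff (x y : t2 F) :
    LieRing.IsNilpotent (LieSubalgebra.lieSpan F (t2 F) {x, y}) ↔ ⁅x, y⁆ = 0 := by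
  set S := LieSubalgebra.lieSpan F (t2 F) {x, y}
  constructor
  · intro hS
    by_contra hxy
    have hx : x ∈ S := LieSubalgebra.subset_lieSpan (by simp)
    have hy : y ∈ S := LieSubalgebra.subset_lieSpan (by simp)
    have hx0 := S.eq_zero_of_lie_eq_smul hx (S.lie_mem hx hy) hxy (lie_lie_eq_smul x x y)
    have hy0 := S.eq_zero_of_lie_eq_smul hy (S.lie_mem hx hy) hxy (lie_lie_eq_smul y x y)
    exact hxy ((lie_eq_zero_iff x y).2 (by simp [Matrix.det_fin_two, hx0, hy0]))
  · intro hxy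
    have hyx : ⁅y, x⁆ = 0 := by rw [← lie_skew, hxy, neg_zero]
    have : IsLieAbelian S := LieSubalgebra.isLieAbelian_lieSpan_iff.2 <| by
      rintro a (rfl | rfl) b (rfl | rfl) <;> simp [hxy, hyx]
    infer_instance

theorem mem_nilSet_iff (x : t2 F) : x ∈ nilSet F (t2 F) ↔ vec x = 0 := by
  simp only [nilSet, Set.mem_ofPred_eq, isNilpotent_lieSpan_pair_iff, lie_eq_zero_iff]
  refine ⟨fun h => ?_, fun h y => by simp [h, Matrix.det_fin_two]⟩
  have h11 := h e11
  have h12 := h e12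
  ext i
  fin_cases i <;> simp_all [Matrix.det_fin_two, vec, e11, e12]

def equivProd : t2 F ≃ (Fin 2 → F) × F where
  toFun x := (vec x, x.1 1 1)
  invFun p := ⟨!![p.2 + p.1 0, p.1 1; 0, p.2], rfl⟩
  left_inv := by
    rintro ⟨x, hx : x 1 0 = 0⟩
    ext i j
    fin_cases i <;> fin_cases j <;> simp [vec, hx]
  right_inv := by
    rintro ⟨w, a⟩
    ext i
    · fin_cases i <;> simp [vec]
    · rfl

def vertexEquiv : {x : t2 F // x ∉ nilSet F (t2 F)} ≃ {w : Fin 2 → F // w ≠ 0} × F :=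
  (equivProd.subtypeEquiv fun x => (mem_nilSet_iff x).not).trans
    (Equiv.prodSubtypeFstEquivSubtypeProd (p := (· ≠ 0)))

theorem coe_vertexEquiv_fst (v : {x : t2 F // x ∉ nilSet F (t2 F)}) :
    ((vertexEquiv v).1 : Fin 2 → F) = vec v.1 :=
  rfl

def vertexPoint (v : {x : t2 F // x ∉ nilSet F (t2 F)}) : ℙ F (Fin 2 → F) :=
  Projectivization.mk' F (vertexEquiv v).1

theorem nilGraph_adj_iff (u v : {x : t2 F // x ∉ nilSet F (t2 F)}) :
    (nilGraph F (t2 F)).Adj u v ↔ u ≠ v ∧ vertexPoint u = vertexPoint v := by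
  rw [vertexPoint, vertexPoint, Projectivization.mk'_eq_mk, Projectivization.mk'_eq_mk,
    Projectivization.mk_eq_mk_iff_det_eq_zero, coe_vertexEquiv_fst, coe_vertexEquiv_fst,
    ← lie_eq_zero_iff, ← isNilpotent_lieSpan_pair_iff]
  rfl

theorem vertexPoint_surjective : Function.Surjective (vertexPoint (F := F)) := by
  intro p
  refine ⟨vertexEquiv.symm (⟨p.rep, p.rep_nonzero⟩, 0), ?_⟩
  rw [vertexPoint, Equiv.apply_symm_apply, Projectivization.mk'_eq_mk, Projectivization.mk_rep]

theorem card_vertexPoint_fiber (p : ℙ F (Fin 2 → F)) :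
    Nat.card {v // vertexPoint v = p} = Nat.card F * (Nat.card F - 1) := by
  rw [Nat.card_congr (vertexEquiv.subtypeEquiv (p := fun v => vertexPoint v = p)
      (q := fun y => Projectivization.mk' F y.1 = p) fun v => Iff.rfl),
    Nat.card_congr (Equiv.prodSubtypeFstEquivSubtypeProd (p := fun w => _ = p)), Nat.card_prod,
    Projectivization.card_mk'_fiber, Nat.card_units, mul_comm]

end t2

theorem nilGraph_t2_components
    (F : Type*) [Field F] [Fintype F] :
    Nat.card ((nilGraph F (t2 F)).ConnectedComponent) = Fintype.card F + 1 ∧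
    (∀ c : (nilGraph F (t2 F)).ConnectedComponent,
      Nat.card {v // (nilGraph F (t2 F)).connectedComponentMk v = c} =
        Fintype.card F * (Fintype.card F - 1)) ∧
    (∀ u v : {x : (t2 F) // x ∉ nilSet F (t2 F)},
      (nilGraph F (t2 F)).connectedComponentMk u =
        (nilGraph F (t2 F)).connectedComponentMk v →
      u ≠ v → (nilGraph F (t2 F)).Adj u v) := by
  have hG := t2.nilGraph_adj_iff (F := F)
  have hcomp (u v) := SimpleGraph.connectedComponentMk_eq_iff_of_adj_iff hG (u := u) (v := v)
  refine ⟨?_, ?_, fun u v huv hne => (hG u v).2 ⟨hne, (hcomp u v).1 huv⟩⟩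
  · rw [SimpleGraph.card_connectedComponent_of_adj_iff hG t2.vertexPoint_surjective,
      Projectivization.card_of_finrank_two _ _ (Module.finrank_fin_fun F), Nat.card_eq_fintype_card]
  · rintro ⟨u⟩
    rw [← Nat.card_eq_fintype_card, ← t2.card_vertexPoint_fiber (t2.vertexPoint u)]
    exact Nat.card_congr (Equiv.subtypeEquivRight fun v => hcomp v u)
end
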